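/- Let G be a finite simple identifiable graph of girth at least 5 containing an induced subgraph P isomorphic to P11 (with x denoting the unique vertex of P of degree 2 in P, i.e. the subdivision vertex), such that every vertex of P other than x has all of its G-neighbours inside P. Then every identifying code C of G satisfies |C ∩ V(P)| ≥ 4. -/

import Mathlib

/-- A graph is *identifiable* if no two distinct vertices have the same closed
neighbourhood. -/
def SimpleGraph.Identifiable {V : Type*} (G : SimpleGraph V) : Prop :=
  ∀ u v : V, insert u (G.neighborSet u) = insert v (G.neighborSet v) → u = v

/-- A set of vertices is *dominating* if every vertex is equal or adjacent to a
member of the set. -/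
def SimpleGraph.DominatingSet {V : Type*} (G : SimpleGraph V) (D : Set V) : Prop :=
  ∀ v : V, ∃ d ∈ D, d = v ∨ G.Adj d v

/-- A set `C` is an *identifying code* if it is dominating and every two distinct
vertices have different closed neighbourhoods within `C`. -/
def SimpleGraph.IdentifyingCode {V : Type*} (G : SimpleGraph V) (C : Set V) : Prop :=
  G.DominatingSet C ∧
    ∀ u v : V, u ≠ v →
      insert u (G.neighborSet u) ∩ C ≠ insert v (G.neighborSet v) ∩ C

/-- The identifying code number: the minimum size of an identifying code. -/
noncomputable def SimpleGraph.gammaID {V : Type*} (G : SimpleGraph V) : ℕ :=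
  sInf {k : ℕ | ∃ C : Set V, G.IdentifyingCode C ∧ C.ncard = k}

/-- The graph `P11`: the Petersen graph (outer vertices `0,…,4`, inner vertices
`5,…,9`, spokes `i — i+5`) with the outer edge `{0,1}` subdivided once by the new
vertex `10`, which is the unique vertex of degree 2. -/
def P11 : SimpleGraph (Fin 11) :=
  SimpleGraph.fromRel (fun a b =>
    (a, b) ∈ ([(0, 10), (1, 10), (1, 2), (2, 3), (3, 4), (4, 0),
               (5, 7), (6, 8), (7, 9), (8, 5), (9, 6),
               (0, 5), (1, 6), (2, 7), (3, 8), (4, 9)] : List (Fin 11 × Fin 11)))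

/-!
Every vertex `v ≠ x` of the copy of `P11` has its closed neighbourhood inside the copy, so its
trace `N[v] ∩ C` is a nonempty (by domination) subset of `C ∩ P`, and these ten traces are
pairwise distinct (by identification). Three code vertices give only `2 ^ 3 - 1 = 7` nonempty
subsets.
-/

namespace SimpleGraph

variable {V : Type*} {G : SimpleGraph V} {C : Set V}

theorem DominatingSet.closedNbhd_inter_nonempty (hC : G.DominatingSet C) (v : V) :
    (insert v (G.neighborSet v) ∩ C).Nonempty := by
  obtain ⟨d, hdC, rfl | hdv⟩ := hC v
  · exact ⟨d, Set.mem_insert d _, hdC⟩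
  · exact ⟨d, Set.mem_insert_of_mem v hdv.symm, hdC⟩

theorem IdentifyingCode.injective_closedNbhd_inter (hC : G.IdentifyingCode C) :
    Function.Injective fun v => insert v (G.neighborSet v) ∩ C := fun u v huv =>
  by_contra fun hne => hC.2 u v hne huv

theorem IdentifyingCode.ncard_lt_two_pow (hC : G.IdentifyingCode C) {S T : Set V}
    (hS : S.Finite) (hTS : ∀ v ∈ T, insert v (G.neighborSet v) ∩ C ⊆ S) :
    T.ncard < 2 ^ S.ncard := by
  have hmaps : ∀ v ∈ T, insert v (G.neighborSet v) ∩ C ∈ 𝒫 S \ {∅} := fun v hv =>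
    ⟨hTS v hv, (hC.1.closedNbhd_inter_nonempty v).ne_empty⟩
  have hle : T.ncard ≤ (𝒫 S \ {∅}).ncard :=
    Set.ncard_le_ncard_of_injOn _ hmaps hC.injective_closedNbhd_inter.injOn
      (hS.powerset.subset Set.sdiff_subset)
  rw [Set.ncard_sdiff_singleton_of_mem (Set.mem_powerset (Set.empty_subset S)),
    Set.ncard_powerset S hS] at hle
  have := Nat.one_le_two_pow (n := S.ncard)
  omega

end SimpleGraph

theorem identifyingCode_inter_P11_ge_four_general
    {V : Type*} (G : SimpleGraph V)
    (P : Set V) (x : V)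
    (φ : G.induce P ≃g P11)
    (hclosed : ∀ v ∈ P, v ≠ x → ∀ w : V, G.Adj v w → w ∈ P)
    (C : Set V) (hC : G.IdentifyingCode C) :
    4 ≤ (C ∩ P).ncard := by
  have hPcard : P.ncard = 11 := by
    rw [← Nat.card_coe_set_eq, Nat.card_eq_of_equiv_fin φ.toEquiv]
  have hPfin : P.Finite := Set.finite_of_ncard_pos (by omega)
  have htraces : ∀ v ∈ P \ {x}, insert v (G.neighborSet v) ∩ C ⊆ C ∩ P := by
    rintro v ⟨hvP, hvx⟩ w ⟨rfl | hvw, hwC⟩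
    · exact ⟨hwC, hvP⟩
    · exact ⟨hwC, hclosed v hvP hvx w hvw⟩
  have hlt : (P \ {x}).ncard < 2 ^ (C ∩ P).ncard :=
    hC.ncard_lt_two_pow (hPfin.subset Set.inter_subset_right) htraces
  have hten : 10 ≤ (P \ {x}).ncard := by
    have := Set.pred_ncard_le_ncard_sdiff_singleton P x
    omega
  by_contra! hsmall
  have : 2 ^ (C ∩ P).ncard ≤ 2 ^ 3 := Nat.pow_le_pow_right two_pos (by omega)
  omega

/-- Lemma: if an identifiable graph of girth at least 5 contains an induced copy of
`P11` whose vertices other than the subdivision vertex `x` have all their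
neighbours inside the copy, then any identifying code contains at least 4 vertices
of the copy. -/
theorem identifyingCode_inter_P11_ge_four
    {V : Type*} [Fintype V] (G : SimpleGraph V) (hid : G.Identifiable)
    (hg : 5 ≤ G.egirth)
    (P : Set V) (x : V) (hx : x ∈ P)
    (φ : G.induce P ≃g P11) (hφx : φ ⟨x, hx⟩ = (10 : Fin 11))
    (hclosed : ∀ v ∈ P, v ≠ x → ∀ w : V, G.Adj v w → w ∈ P)
    (C : Set V) (hC : G.IdentifyingCode C) :
    4 ≤ (C ∩ P).ncard :=
  identifyingCode_inter_P11_ge_four_general G P x φ hclosed C hC
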